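/- Multi-dimensional Chebyshev integral inequality: let D ≥ 1 and let f, g : [0,1]^D → ℝ be bounded measurable functions such that for every coordinate i ∈ {1,…,D}, with the other variables held fixed, f and g are both non-decreasing in x_i or both non-increasing in x_i. Then ∫_{[0,1]^D} f g dλ ≥ (∫_{[0,1]^D} f dλ) · (∫_{[0,1]^D} g dλ), where λ is D-dimensional Lebesgue measure on the unit cube. -/

import Mathlib

open MeasureTheory

/-- The unit cube `[0,1]^D` as a subset of `Fin D → ℝ`. -/
def unitCube (D : ℕ) : Set (Fin D → ℝ) := {x | ∀ i, x i ∈ Set.Icc (0 : ℝ) 1}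

/-- The `D`-dimensional Lebesgue (product) probability measure on the unit cube. -/
noncomputable def cubeMeasure (D : ℕ) : Measure (Fin D → ℝ) :=
  Measure.pi fun _ => volume.restrict (Set.Icc (0 : ℝ) 1)

/-!
Induction on the dimension, integrating out the first coordinate. For `F t` and `G t`
the integrals of `f` and `g` over the slice `x₀ = t`, the induction hypothesis on each
slice gives `∫ f g ≥ ∫ F G`, and `F`, `G` are both monotone or both antitone in `t`, so
the one-dimensional Chebyshev inequality `∫ F G ≥ (∫ F) (∫ G)` finishes. The latter
holds on any probability space for functions varying in the same direction, by
integrating `(F s - F t) (G s - G t) ≥ 0` over `s` and `t`.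
-/

open Set

section Chebyshev

variable {α : Type*} [MeasurableSpace α] {μ : Measure α} {f g : α → ℝ}

lemma Measurable.integrable_of_abs_le [IsFiniteMeasure μ] {C : ℝ} (hf : Measurable f)
    (hC : ∀ x, |f x| ≤ C) : Integrable f μ :=
  .of_bound hf.aestronglyMeasurable C (ae_of_all _ hC)

variable [IsProbabilityMeasure μ]

lemma integral_sub_mul_sub (hf : Integrable f μ) (hg : Integrable g μ)
    (hfg : Integrable (fun x => f x * g x) μ) (a b : ℝ) :
    ∫ y, (a - f y) * (b - g y) ∂μ
      = a * b - a * ∫ y, g y ∂μ - b * ∫ y, f y ∂μ + ∫ y, f y * g y ∂μ := by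
  have hexpand : (fun y => (a - f y) * (b - g y))
      = fun y => a * b - a * g y - b * f y + f y * g y := by
    funext y; ring
  rw [hexpand, integral_add _ hfg, integral_sub _ (hf.const_mul b),
    integral_sub (integrable_const _) (hg.const_mul a)]
  · simp [integral_const_mul]
  · exact (integrable_const _).sub (hg.const_mul a)
  · exact ((integrable_const _).sub (hg.const_mul a)).sub (hf.const_mul b)

theorem integral_mul_integral_le_integral_mul_of_monovaryOn {s : Set α}
    (hf : Integrable f μ) (hg : Integrable g μ) (hfg : Integrable (fun x => f x * g x) μ)
    (hmono : MonovaryOn f g s) (hs : ∀ᵐ x ∂μ, x ∈ s) :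
    (∫ x, f x ∂μ) * (∫ x, g x ∂μ) ≤ ∫ x, f x * g x ∂μ := by
  have hinner : ∀ᵐ x ∂μ, 0 ≤ ∫ y, (f x - f y) * (g x - g y) ∂μ := by
    filter_upwards [hs] with x hx
    refine integral_nonneg_of_ae ?_
    filter_upwards [hs] with y hy
    exact hmono.sub_mul_sub_nonneg hy hx
  have hdouble : 0 ≤ ∫ x, ∫ y, (f x - f y) * (g x - g y) ∂μ ∂μ :=
    integral_nonneg_of_ae hinner
  simp_rw [integral_sub_mul_sub hf hg hfg] at hdouble
  have hlin : Integrable (fun x => f x * g x - f x * ∫ y, g y ∂μ) μ :=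
    hfg.sub (hf.mul_const _)
  rw [integral_add ?_ (integrable_const _), integral_sub hlin (hg.mul_const _),
    integral_sub hfg (hf.mul_const _)] at hdouble
  · simp only [integral_mul_const, integral_const, probReal_univ, one_smul] at hdouble
    linarith
  · exact hlin.sub (hg.mul_const _)

end Chebyshev

section FinCons

variable {β : Type*} [MeasurableSpace β] {n : ℕ}

lemma MeasurableEquiv.coe_piFinSuccAbove_zero_symm :
    ⇑(MeasurableEquiv.piFinSuccAbove (fun _ : Fin (n + 1) => β) 0).symm
      = fun p => Fin.cons p.1 p.2 := by
  ext p : 1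
  simp [MeasurableEquiv.piFinSuccAbove_symm_apply, Fin.insertNthEquiv_zero, Fin.consEquiv]

lemma measurable_fin_cons (t : β) :
    Measurable (fun x : Fin n → β => (Fin.cons t x : Fin (n + 1) → β)) := by
  have := (MeasurableEquiv.piFinSuccAbove (fun _ : Fin (n + 1) => β) 0).symm.measurable
  rw [MeasurableEquiv.coe_piFinSuccAbove_zero_symm] at this
  exact this.comp (measurable_const.prodMk measurable_id)

lemma measurePreserving_fin_cons (μ : Measure β) [SigmaFinite μ] :
    MeasurePreserving (fun p : β × (Fin n → β) => (Fin.cons p.1 p.2 : Fin (n + 1) → β))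
      (μ.prod (Measure.pi fun _ => μ)) (Measure.pi fun _ => μ) := by
  rw [← MeasurableEquiv.coe_piFinSuccAbove_zero_symm]
  exact (measurePreserving_piFinSuccAbove (fun _ => μ) 0).symm

lemma measurableEmbedding_fin_cons :
    MeasurableEmbedding fun p : β × (Fin n → β) =>
      (Fin.cons p.1 p.2 : Fin (n + 1) → β) := by
  rw [← MeasurableEquiv.coe_piFinSuccAbove_zero_symm]
  exact MeasurableEquiv.measurableEmbedding _

variable {μ : Measure β} [SigmaFinite μ] {h : (Fin (n + 1) → β) → ℝ}

lemma integral_pi_fin_succ (hh : Integrable h (Measure.pi fun _ => μ)) :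
    ∫ z, h z ∂Measure.pi (fun _ => μ)
      = ∫ t, ∫ x, h (Fin.cons t x) ∂Measure.pi (fun _ => μ) ∂μ := by
  rw [← (measurePreserving_fin_cons μ).integral_comp measurableEmbedding_fin_cons]
  exact integral_prod _ (((measurePreserving_fin_cons μ).integrable_comp_emb
      measurableEmbedding_fin_cons).2 hh)

lemma MeasureTheory.Integrable.integral_fin_cons (hh : Integrable h (Measure.pi fun _ => μ)) :
    Integrable (fun t => ∫ x, h (Fin.cons t x) ∂Measure.pi (fun _ => μ)) μ :=
  (((measurePreserving_fin_cons μ).integrable_comp_emb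
    measurableEmbedding_fin_cons).2 hh).integral_prod_left

end FinCons

section MonotoneOnIntegral

variable {α ι : Type*} [MeasurableSpace α] {μ : Measure α} [Preorder ι] {s : Set ι}
  {F : ι → α → ℝ}

lemma monotoneOn_integral_of_ae (hF : ∀ t ∈ s, Integrable (F t) μ)
    (hmono : ∀ᵐ x ∂μ, MonotoneOn (fun t => F t x) s) :
    MonotoneOn (fun t => ∫ x, F t x ∂μ) s := fun a ha b hb hab =>
  integral_mono_ae (hF a ha) (hF b hb) (by filter_upwards [hmono] with x hx using hx ha hb hab)

lemma antitoneOn_integral_of_ae (hF : ∀ t ∈ s, Integrable (F t) μ)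
    (hanti : ∀ᵐ x ∂μ, AntitoneOn (fun t => F t x) s) :
    AntitoneOn (fun t => ∫ x, F t x ∂μ) s := fun a ha b hb hab =>
  integral_mono_ae (hF b hb) (hF a ha) (by filter_upwards [hanti] with x hx using hx ha hb hab)

end MonotoneOnIntegral

instance : IsProbabilityMeasure (volume.restrict (Icc (0 : ℝ) 1)) := ⟨by simp⟩

instance (D : ℕ) : IsProbabilityMeasure (cubeMeasure D) := by
  unfold cubeMeasure; infer_instance

lemma ae_mem_unitCube (D : ℕ) : ∀ᵐ x ∂cubeMeasure D, x ∈ unitCube D :=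
  Measure.ae_pi_le_pi (Filter.eventually_pi fun _ => ae_restrict_mem measurableSet_Icc)

lemma fin_cons_mem_unitCube_iff {D : ℕ} {t : ℝ} {x : Fin D → ℝ} :
    (Fin.cons t x : Fin (D + 1) → ℝ) ∈ unitCube (D + 1) ↔
      t ∈ Icc 0 1 ∧ x ∈ unitCube D :=
  Fin.forall_fin_succ

section CoordMonotone

variable {D : ℕ} {β : Type*} [Preorder β]

def MonotoneInCoord (i : Fin D) (f : (Fin D → ℝ) → β) : Prop :=
  ∀ x y : Fin D → ℝ, x ∈ unitCube D → y ∈ unitCube D →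
    (∀ j, j ≠ i → x j = y j) → x i ≤ y i → f x ≤ f y

def AntitoneInCoord (i : Fin D) (f : (Fin D → ℝ) → β) : Prop :=
  ∀ x y : Fin D → ℝ, x ∈ unitCube D → y ∈ unitCube D →
    (∀ j, j ≠ i → x j = y j) → x i ≤ y i → f y ≤ f x

def CoordwiseSimilarlyMonotone (f g : (Fin D → ℝ) → ℝ) : Prop :=
  ∀ i, (MonotoneInCoord i f ∧ MonotoneInCoord i g) ∨
    (AntitoneInCoord i f ∧ AntitoneInCoord i g)

variable {f : (Fin (D + 1) → ℝ) → β} {t : ℝ}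

lemma MonotoneInCoord.comp_fin_cons {i : Fin D} (hf : MonotoneInCoord i.succ f)
    (ht : t ∈ Icc 0 1) : MonotoneInCoord i fun x => f (Fin.cons t x) :=
  fun _ _ hx hy hxy hle => hf _ _ (fin_cons_mem_unitCube_iff.2 ⟨ht, hx⟩)
    (fin_cons_mem_unitCube_iff.2 ⟨ht, hy⟩)
    (Fin.forall_fin_succ.2 ⟨fun _ => rfl, fun j hj => hxy j (ne_of_apply_ne Fin.succ hj)⟩) hle

-- `AntitoneInCoord` into `β` is definitionally `MonotoneInCoord` into `βᵒᵈ`.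
lemma AntitoneInCoord.comp_fin_cons {i : Fin D} (hf : AntitoneInCoord i.succ f)
    (ht : t ∈ Icc 0 1) : AntitoneInCoord i fun x => f (Fin.cons t x) :=
  MonotoneInCoord.comp_fin_cons (β := βᵒᵈ) hf ht

lemma CoordwiseSimilarlyMonotone.comp_fin_cons {f g : (Fin (D + 1) → ℝ) → ℝ}
    (hfg : CoordwiseSimilarlyMonotone f g) (ht : t ∈ Icc 0 1) :
    CoordwiseSimilarlyMonotone (fun x => f (Fin.cons t x)) (fun x => g (Fin.cons t x)) :=
  fun i => (hfg i.succ).imp (And.imp (·.comp_fin_cons ht) (·.comp_fin_cons ht))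
    (And.imp (·.comp_fin_cons ht) (·.comp_fin_cons ht))

lemma MonotoneInCoord.monotoneOn_fin_cons (hf : MonotoneInCoord 0 f) {x : Fin D → ℝ}
    (hx : x ∈ unitCube D) : MonotoneOn (fun t => f (Fin.cons t x)) (Icc 0 1) :=
  fun _ hs _ ht hst => hf _ _ (fin_cons_mem_unitCube_iff.2 ⟨hs, hx⟩)
    (fin_cons_mem_unitCube_iff.2 ⟨ht, hx⟩)
    (Fin.forall_fin_succ.2 ⟨fun h => absurd rfl h, fun _ _ => rfl⟩) hst

lemma AntitoneInCoord.antitoneOn_fin_cons (hf : AntitoneInCoord 0 f) {x : Fin D → ℝ}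
    (hx : x ∈ unitCube D) : AntitoneOn (fun t => f (Fin.cons t x)) (Icc 0 1) :=
  MonotoneInCoord.monotoneOn_fin_cons (β := βᵒᵈ) hf hx

end CoordMonotone

section Cube

variable {D : ℕ} {f g : (Fin (D + 1) → ℝ) → ℝ}

lemma integral_cubeMeasure_succ {h : (Fin (D + 1) → ℝ) → ℝ}
    (hh : Integrable h (cubeMeasure (D + 1))) :
    ∫ z, h z ∂cubeMeasure (D + 1)
      = ∫ t in Icc 0 1, ∫ x, h (Fin.cons t x) ∂cubeMeasure D :=
  integral_pi_fin_succ hh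

lemma MonotoneInCoord.monotoneOn_integral_fin_cons (hf0 : MonotoneInCoord 0 f)
    (hf : ∀ t, Integrable (fun x => f (Fin.cons t x)) (cubeMeasure D)) :
    MonotoneOn (fun t => ∫ x, f (Fin.cons t x) ∂cubeMeasure D) (Icc 0 1) :=
  monotoneOn_integral_of_ae (fun t _ => hf t)
    ((ae_mem_unitCube D).mono fun _ => hf0.monotoneOn_fin_cons)

lemma AntitoneInCoord.antitoneOn_integral_fin_cons (hf0 : AntitoneInCoord 0 f)
    (hf : ∀ t, Integrable (fun x => f (Fin.cons t x)) (cubeMeasure D)) :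
    AntitoneOn (fun t => ∫ x, f (Fin.cons t x) ∂cubeMeasure D) (Icc 0 1) :=
  antitoneOn_integral_of_ae (fun t _ => hf t)
    ((ae_mem_unitCube D).mono fun _ => hf0.antitoneOn_fin_cons)

lemma integral_mul_integral_le_integral_mul_of_fin_cons {Cf Cg : ℝ}
    (hf : Measurable f) (hg : Measurable g) (hfC : ∀ x, |f x| ≤ Cf) (hgC : ∀ x, |g x| ≤ Cg)
    (h0 : (MonotoneInCoord 0 f ∧ MonotoneInCoord 0 g) ∨
      (AntitoneInCoord 0 f ∧ AntitoneInCoord 0 g))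
    (hslice : ∀ t ∈ Icc (0 : ℝ) 1,
      (∫ x, f (Fin.cons t x) ∂cubeMeasure D) * (∫ x, g (Fin.cons t x) ∂cubeMeasure D)
        ≤ ∫ x, f (Fin.cons t x) * g (Fin.cons t x) ∂cubeMeasure D) :
    (∫ x, f x ∂cubeMeasure (D + 1)) * (∫ x, g x ∂cubeMeasure (D + 1))
      ≤ ∫ x, f x * g x ∂cubeMeasure (D + 1) := by
  have hfI : Integrable f (cubeMeasure (D + 1)) := hf.integrable_of_abs_le hfC
  have hgI : Integrable g (cubeMeasure (D + 1)) := hg.integrable_of_abs_le hgC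
  have hfgI : Integrable (fun x => f x * g x) (cubeMeasure (D + 1)) :=
    hgI.bdd_mul hf.aestronglyMeasurable (ae_of_all _ hfC)
  have hf_slice (t : ℝ) : Integrable (fun x => f (Fin.cons t x)) (cubeMeasure D) :=
    (hf.comp (measurable_fin_cons t)).integrable_of_abs_le fun _ => hfC _
  have hg_slice (t : ℝ) : Integrable (fun x => g (Fin.cons t x)) (cubeMeasure D) :=
    (hg.comp (measurable_fin_cons t)).integrable_of_abs_le fun _ => hgC _
  have hF_bound (t : ℝ) : ‖∫ x, f (Fin.cons t x) ∂cubeMeasure D‖ ≤ Cf := by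
    simpa using norm_integral_le_of_norm_le_const (μ := cubeMeasure D)
      (f := fun x => f (Fin.cons t x)) (ae_of_all _ fun x => hfC (Fin.cons t x))
  have hmonovary : MonovaryOn (fun t => ∫ x, f (Fin.cons t x) ∂cubeMeasure D)
      (fun t => ∫ x, g (Fin.cons t x) ∂cubeMeasure D) (Icc 0 1) := by
    rcases h0 with ⟨hf0, hg0⟩ | ⟨hf0, hg0⟩
    · exact (hf0.monotoneOn_integral_fin_cons hf_slice).monovaryOn
        (hg0.monotoneOn_integral_fin_cons hg_slice)
    · exact (hf0.antitoneOn_integral_fin_cons hf_slice).monovaryOn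
        (hg0.antitoneOn_integral_fin_cons hg_slice)
  rw [integral_cubeMeasure_succ hfI, integral_cubeMeasure_succ hgI,
    integral_cubeMeasure_succ hfgI]
  set F := fun t => ∫ x, f (Fin.cons t x) ∂cubeMeasure D
  set G := fun t => ∫ x, g (Fin.cons t x) ∂cubeMeasure D
  have hFG : Integrable (fun t => F t * G t) (volume.restrict (Icc 0 1)) :=
    hgI.integral_fin_cons.bdd_mul hfI.integral_fin_cons.aestronglyMeasurable
      (ae_of_all _ hF_bound)
  calc (∫ t in Icc 0 1, F t) * (∫ t in Icc 0 1, G t) ≤ ∫ t in Icc 0 1, F t * G t :=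
        integral_mul_integral_le_integral_mul_of_monovaryOn hfI.integral_fin_cons
          hgI.integral_fin_cons hFG hmonovary (ae_restrict_mem measurableSet_Icc)
    _ ≤ _ := integral_mono_ae hFG hfgI.integral_fin_cons
        ((ae_restrict_mem measurableSet_Icc).mono hslice)

end Cube

theorem integral_mul_integral_le_integral_mul_of_coordwiseSimilarlyMonotone {D : ℕ}
    {f g : (Fin D → ℝ) → ℝ} {Cf Cg : ℝ} (hf : Measurable f) (hg : Measurable g)
    (hfC : ∀ x, |f x| ≤ Cf) (hgC : ∀ x, |g x| ≤ Cg) (hfg : CoordwiseSimilarlyMonotone f g) :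
    (∫ x, f x ∂cubeMeasure D) * (∫ x, g x ∂cubeMeasure D)
      ≤ ∫ x, f x * g x ∂cubeMeasure D := by
  induction D with
  | zero => simp [integral_unique]
  | succ D ih =>
    exact integral_mul_integral_le_integral_mul_of_fin_cons hf hg hfC hgC (hfg 0) fun t ht =>
      ih (hf.comp (measurable_fin_cons t)) (hg.comp (measurable_fin_cons t)) (fun _ => hfC _)
        (fun _ => hgC _) (hfg.comp_fin_cons ht)

theorem chebyshev_multidimensional_integral_inequality_general
    (D : ℕ) (f g : (Fin D → ℝ) → ℝ)
    (hf_meas : Measurable f) (hg_meas : Measurable g)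
    (hf_bdd : ∃ C : ℝ, ∀ x, |f x| ≤ C) (hg_bdd : ∃ C : ℝ, ∀ x, |g x| ≤ C)
    (hmono : ∀ i : Fin D,
      ((∀ x y : Fin D → ℝ, x ∈ unitCube D → y ∈ unitCube D →
          (∀ j, j ≠ i → x j = y j) → x i ≤ y i → f x ≤ f y) ∧
        (∀ x y : Fin D → ℝ, x ∈ unitCube D → y ∈ unitCube D →
          (∀ j, j ≠ i → x j = y j) → x i ≤ y i → g x ≤ g y)) ∨
      ((∀ x y : Fin D → ℝ, x ∈ unitCube D → y ∈ unitCube D →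
          (∀ j, j ≠ i → x j = y j) → x i ≤ y i → f y ≤ f x) ∧
        (∀ x y : Fin D → ℝ, x ∈ unitCube D → y ∈ unitCube D →
          (∀ j, j ≠ i → x j = y j) → x i ≤ y i → g y ≤ g x))) :
    ∫ x, f x * g x ∂(cubeMeasure D) ≥
      (∫ x, f x ∂(cubeMeasure D)) * (∫ x, g x ∂(cubeMeasure D)) := by
  obtain ⟨Cf, hfC⟩ := hf_bdd
  obtain ⟨Cg, hgC⟩ := hg_bdd
  exact integral_mul_integral_le_integral_mul_of_coordwiseSimilarlyMonotone hf_meas hg_meas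
    hfC hgC hmono

/-- Multi-dimensional Chebyshev integral inequality: if the bounded measurable
functions `f, g : [0,1]^D → ℝ` are, in each coordinate separately (the others
held fixed), both non-decreasing or both non-increasing, then
`∫ f·g ≥ (∫ f)·(∫ g)` over the unit cube. -/
theorem chebyshev_multidimensional_integral_inequality
    (D : ℕ) (hD : 1 ≤ D) (f g : (Fin D → ℝ) → ℝ)
    (hf_meas : Measurable f) (hg_meas : Measurable g)
    (hf_bdd : ∃ C : ℝ, ∀ x, |f x| ≤ C) (hg_bdd : ∃ C : ℝ, ∀ x, |g x| ≤ C)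
    (hmono : ∀ i : Fin D,
      ((∀ x y : Fin D → ℝ, x ∈ unitCube D → y ∈ unitCube D →
          (∀ j, j ≠ i → x j = y j) → x i ≤ y i → f x ≤ f y) ∧
        (∀ x y : Fin D → ℝ, x ∈ unitCube D → y ∈ unitCube D →
          (∀ j, j ≠ i → x j = y j) → x i ≤ y i → g x ≤ g y)) ∨
      ((∀ x y : Fin D → ℝ, x ∈ unitCube D → y ∈ unitCube D →
          (∀ j, j ≠ i → x j = y j) → x i ≤ y i → f y ≤ f x) ∧
        (∀ x y : Fin D → ℝ, x ∈ unitCube D → y ∈ unitCube D →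
          (∀ j, j ≠ i → x j = y j) → x i ≤ y i → g y ≤ g x))) :
    ∫ x, f x * g x ∂(cubeMeasure D) ≥
      (∫ x, f x ∂(cubeMeasure D)) * (∫ x, g x ∂(cubeMeasure D)) :=
  chebyshev_multidimensional_integral_inequality_general D f g hf_meas hg_meas hf_bdd hg_bdd hmono
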